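/- arXiv:1307.0879 — 5 statements merged into one kernel-verified Lean document; each statement's English description precedes it below -/
import Mathlib

section
/- For a prime power q ≥ 2 and |u| < q, the infinite product ∏_{i≥1} (1 - u/q^i) equals the sum ∑_{j≥0} (-u)^j / ((q^j - 1)(q^{j-1} - 1) ⋯ (q - 1)). -/
/-!
Write `S(u) = ∑ (-u)^j / ((q^j - 1) ⋯ (q - 1))`. Comparing coefficients gives the functional
equation `S(u) = (1 - u/q) S(u/q)`; iterating it `N` times yields
`S(u) = ∏_{i ≤ N} (1 - u/q^i) · S(u/q^N)`, and `S(u/q^N) → S(0) = 1` by dominated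
convergence, the terms of `S(u/q^N)` being bounded by those of
`∑ |u|^j / ((q^j - 1) ⋯ (q - 1))`.
-/

open Finset Filter Topology

variable {q : ℝ}

noncomputable def eulerDenom (q : ℝ) (j : ℕ) : ℝ := ∏ k ∈ Icc 1 j, (q ^ k - 1)

noncomputable def eulerSeries (q u : ℝ) : ℝ := ∑' j : ℕ, (-u) ^ j / eulerDenom q j

@[simp]
lemma eulerDenom_zero (q : ℝ) : eulerDenom q 0 = 1 := by simp [eulerDenom]

lemma eulerDenom_succ (q : ℝ) (j : ℕ) :
    eulerDenom q (j + 1) = eulerDenom q j * (q ^ (j + 1) - 1) := by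
  rw [eulerDenom, eulerDenom, prod_Icc_succ_top (by omega)]

lemma pow_sub_one_pos (hq : 1 < q) {k : ℕ} (hk : k ≠ 0) : 0 < q ^ k - 1 :=
  sub_pos.mpr (one_lt_pow₀ hq hk)

lemma eulerDenom_pos (hq : 1 < q) (j : ℕ) : 0 < eulerDenom q j :=
  prod_pos fun k hk => pow_sub_one_pos hq (by simp at hk; omega)

lemma summable_pow_div_eulerDenom (hq : 1 < q) (v : ℝ) :
    Summable fun j => v ^ j / eulerDenom q j := by
  refine summable_of_ratio_norm_eventually_le (r := 1 / 2) (by norm_num) ?_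
  have hlarge : ∀ᶠ j : ℕ in atTop, 2 * |v| + 1 ≤ q ^ (j + 1) :=
    (tendsto_add_atTop_nat 1).eventually
      ((tendsto_pow_atTop_atTop_of_one_lt hq).eventually_ge_atTop _)
  filter_upwards [hlarge] with j hj
  have hfac := pow_sub_one_pos hq (Nat.add_one_ne_zero j)
  have hratio : |v| / (q ^ (j + 1) - 1) ≤ 1 / 2 := by
    rw [div_le_div_iff₀ hfac two_pos]; linarith
  calc ‖v ^ (j + 1) / eulerDenom q (j + 1)‖
      = ‖v ^ j / eulerDenom q j‖ * (|v| / (q ^ (j + 1) - 1)) := by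
        rw [eulerDenom_succ, pow_succ, mul_div_mul_comm, norm_mul, norm_div (a := v),
          Real.norm_eq_abs v, Real.norm_of_nonneg hfac.le]
    _ ≤ 1 / 2 * ‖v ^ j / eulerDenom q j‖ := by
        rw [mul_comm]; exact mul_le_mul_of_nonneg_right hratio (norm_nonneg _)

@[simp]
lemma eulerSeries_zero (q : ℝ) : eulerSeries q 0 = 1 := by
  rw [eulerSeries, tsum_eq_single 0 fun j hj => by simp [hj]]
  simp

lemma eulerSeries_term_succ_sub (hq : 1 < q) (u : ℝ) (j : ℕ) :
    (-u) ^ (j + 1) / eulerDenom q (j + 1) - (-(u / q)) ^ (j + 1) / eulerDenom q (j + 1) =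
      -(u / q) * ((-(u / q)) ^ j / eulerDenom q j) := by
  have hq0 : q ≠ 0 := by positivity
  have hfac := (pow_sub_one_pos hq (Nat.add_one_ne_zero j)).ne'
  have hden := (eulerDenom_pos hq j).ne'
  rw [eulerDenom_succ, neg_div', div_pow, div_pow]
  field_simp
  ring

lemma eulerSeries_eq_mul_eulerSeries_div (hq : 1 < q) (u : ℝ) :
    eulerSeries q u = (1 - u / q) * eulerSeries q (u / q) := by
  have hu := summable_pow_div_eulerDenom hq (-u)
  have huq := summable_pow_div_eulerDenom hq (-(u / q))
  have hdiff : eulerSeries q u - eulerSeries q (u / q) = -(u / q) * eulerSeries q (u / q) := by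
    rw [eulerSeries, eulerSeries, ← hu.tsum_sub huq, (hu.sub huq).tsum_eq_zero_add,
      ← tsum_mul_left]
    simp only [pow_zero, sub_self, zero_add, eulerSeries_term_succ_sub hq]
  linear_combination hdiff

lemma eulerSeries_eq_prod_mul_eulerSeries (hq : 1 < q) (u : ℝ) (N : ℕ) :
    eulerSeries q u = (∏ i ∈ range N, (1 - u / q ^ (i + 1))) * eulerSeries q (u / q ^ N) := by
  induction N with
  | zero => simp
  | succ N ih =>
    rw [ih, eulerSeries_eq_mul_eulerSeries_div hq (u / q ^ N), prod_range_succ, div_div,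
      ← pow_succ]
    ring

lemma tendsto_eulerSeries_div_pow (hq : 1 < q) (u : ℝ) :
    Tendsto (fun N : ℕ => eulerSeries q (u / q ^ N)) atTop (𝓝 1) := by
  have hq0 : 0 < q := by positivity
  have hlim : Tendsto (fun N : ℕ => u / q ^ N) atTop (𝓝 0) :=
    tendsto_const_nhds.div_atTop (tendsto_pow_atTop_atTop_of_one_lt hq)
  rw [← eulerSeries_zero q]
  refine tendsto_tsum_of_dominated_convergence (summable_pow_div_eulerDenom hq |u|)
    (fun j => ((continuous_neg.pow j).div_const _).tendsto 0 |>.comp hlim)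
    (Eventually.of_forall fun N j => ?_)
  have hsmall : |u / q ^ N| ≤ |u| := by
    rw [abs_div, abs_of_pos (pow_pos hq0 N)]
    exact div_le_self (abs_nonneg u) (one_le_pow₀ hq.le)
  have hden := (eulerDenom_pos hq j).le
  rw [norm_div, norm_pow, norm_neg, Real.norm_eq_abs, Real.norm_of_nonneg hden]
  gcongr

lemma multipliable_one_sub_div_pow (hq : 1 < q) (u : ℝ) :
    Multipliable fun i : ℕ => 1 - u / q ^ (i + 1) := by
  have hq0 : 0 < q := by positivity
  have hgeom : Summable fun i : ℕ => -(u / q) * q⁻¹ ^ i :=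
    (summable_geometric_of_lt_one (by positivity) (inv_lt_one_of_one_lt₀ hq)).mul_left _
  simp_rw [sub_eq_add_neg]
  refine Real.multipliable_one_add_of_summable (hgeom.congr fun i => ?_)
  rw [pow_succ, inv_pow]
  field_simp

theorem euler_identity_product_general (q u : ℝ) (hq : 2 ≤ q) :
    (∏' i : ℕ, (1 - u / q ^ (i + 1))) =
      ∑' j : ℕ, (-u) ^ j / ∏ k ∈ Finset.Icc 1 j, (q ^ k - 1) := by
  have hq₁ : 1 < q := by linarith
  have hpartial := (multipliable_one_sub_div_pow hq₁ u).hasProd.tendsto_prod_nat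
  have hlim := hpartial.mul (tendsto_eulerSeries_div_pow hq₁ u)
  simp_rw [← eulerSeries_eq_prod_mul_eulerSeries hq₁, mul_one] at hlim
  exact tendsto_nhds_unique tendsto_const_nhds hlim |>.symm

/-- Euler's identity: for `q ≥ 2` and `|u| < q`,
`∏_{i ≥ 1} (1 - u/q^i) = ∑_{j ≥ 0} (-u)^j / ((q^j - 1) ⋯ (q - 1))`. -/
theorem euler_identity_product (q u : ℝ) (hq : 2 ≤ q) (hu : |u| < q) :
    (∏' i : ℕ, (1 - u / q ^ (i + 1))) =
      ∑' j : ℕ, (-u) ^ j / ∏ k ∈ Finset.Icc 1 j, (q ^ k - 1) :=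
  euler_identity_product_general q u hq
end

section
/- For any real q ≥ 2, the infinite product ∏_{i≥1} (1 - 1/q^i)^{-1} is at most 3.5. -/
/-!
Each factor only grows when `q` decreases, so it suffices to take `q = 2`. There the first nine
factors multiply to less than `3.4594`, and by `∏ (1 - xᵢ) ≥ 1 - ∑ xᵢ` the remaining ones multiply
to at most `(1 - ∑_{i ≥ 10} 2⁻ⁱ)⁻¹ = (1 - 1/512)⁻¹`.
-/

open Finset

theorem tprod_le_of_prod_range_le {α : Type*} [CommMonoid α] [Preorder α] [TopologicalSpace α]
    [ClosedIicTopology α] {f : ℕ → α} {c : α} (h : ∀ n, ∏ i ∈ range n, f i ≤ c) :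
    ∏' n, f n ≤ c := by
  by_cases hf : Multipliable f
  · exact hf.tprod_le_of_prod_range_le h
  · simpa [tprod_eq_one_of_not_multipliable hf] using h 0

namespace Finset

variable {ι R : Type*} {s : Finset ι} {x : ι → R}

theorem one_sub_sum_le_prod_one_sub [CommRing R] [LinearOrder R] [IsStrictOrderedRing R]
    (h0 : ∀ i ∈ s, 0 ≤ x i) (h1 : ∀ i ∈ s, x i ≤ 1) :
    1 - ∑ i ∈ s, x i ≤ ∏ i ∈ s, (1 - x i) := by
  classical
  induction s using Finset.induction_on with
  | empty => simp
  | insert a s ha ih =>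
    simp only [mem_insert, forall_eq_or_imp] at h0 h1
    rw [sum_insert ha, prod_insert ha]
    have hsum : 0 ≤ ∑ i ∈ s, x i := sum_nonneg h0.2
    have hprod := ih h0.2 h1.2
    nlinarith [h0.1, h1.1]

theorem prod_inv_one_sub_le_inv_one_sub_sum [Field R] [LinearOrder R] [IsStrictOrderedRing R]
    (h0 : ∀ i ∈ s, 0 ≤ x i) (h1 : ∀ i ∈ s, x i ≤ 1) (hs : ∑ i ∈ s, x i < 1) :
    ∏ i ∈ s, (1 - x i)⁻¹ ≤ (1 - ∑ i ∈ s, x i)⁻¹ := by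
  rw [prod_inv_distrib]
  exact inv_anti₀ (sub_pos.2 hs) (one_sub_sum_le_prod_one_sub h0 h1)

end Finset

section

variable {p q : ℝ} {n : ℕ}

theorem one_le_inv_one_sub_one_div_pow (hp : 1 < p) (hn : n ≠ 0) : 1 ≤ (1 - 1 / p ^ n)⁻¹ := by
  have hpn : 0 < 1 / p ^ n := by positivity
  have hpn' : 1 / p ^ n < 1 := (div_lt_one (by positivity)).2 (one_lt_pow₀ hp hn)
  exact (one_le_inv₀ (by linarith)).2 (by linarith)

theorem inv_one_sub_one_div_pow_le (hp : 1 < p) (hpq : p ≤ q) (hn : n ≠ 0) :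
    (1 - 1 / q ^ n)⁻¹ ≤ (1 - 1 / p ^ n)⁻¹ := by
  have hp0 : 0 < p := by linarith
  refine inv_anti₀ ?_ (sub_le_sub_left ?_ 1)
  · exact sub_pos.2 ((div_lt_one (by positivity)).2 (one_lt_pow₀ hp hn))
  · exact one_div_le_one_div_of_le (by positivity) (pow_le_pow_left₀ hp0.le hpq n)

end

theorem sum_range_one_div_two_pow_add_le (m n : ℕ) :
    ∑ j ∈ range n, 1 / (2 : ℝ) ^ (m + j + 1) ≤ 1 / 2 ^ m := by
  have hterm (j : ℕ) : 1 / (2 : ℝ) ^ (m + j + 1) = 1 / 2 ^ (m + 1) * (1 / 2) ^ j := by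
    rw [one_div_pow, one_div_mul_one_div, ← pow_add, add_right_comm]
  rw [sum_congr rfl fun j _ => hterm j, ← mul_sum]
  calc 1 / (2 : ℝ) ^ (m + 1) * ∑ j ∈ range n, (1 / 2) ^ j ≤ 1 / 2 ^ (m + 1) * 2 := by
        gcongr; exact sum_geometric_two_le n
    _ = 1 / 2 ^ m := by rw [pow_succ]; field_simp

theorem prod_range_inv_one_sub_one_div_two_pow_add_le {m : ℕ} (hm : m ≠ 0) (n : ℕ) :
    ∏ j ∈ range n, (1 - 1 / (2 : ℝ) ^ (m + j + 1))⁻¹ ≤ (1 - 1 / 2 ^ m)⁻¹ := by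
  have hsum := sum_range_one_div_two_pow_add_le m n
  have hlt : 1 / (2 : ℝ) ^ m < 1 := (div_lt_one (by positivity)).2 (one_lt_pow₀ one_lt_two hm)
  calc ∏ j ∈ range n, (1 - 1 / (2 : ℝ) ^ (m + j + 1))⁻¹
      ≤ (1 - ∑ j ∈ range n, 1 / (2 : ℝ) ^ (m + j + 1))⁻¹ :=
        prod_inv_one_sub_le_inv_one_sub_sum (fun j _ => by positivity)
          (fun j _ => div_le_one_of_le₀ (one_le_pow₀ one_le_two) (by positivity)) (by linarith)
    _ ≤ (1 - 1 / 2 ^ m)⁻¹ := inv_anti₀ (by linarith) (by linarith)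

theorem prod_range_inv_one_sub_one_div_two_pow_le (n : ℕ) :
    ∏ i ∈ range n, (1 - 1 / (2 : ℝ) ^ (i + 1))⁻¹ ≤ 7 / 2 := by
  have hfactor (i : ℕ) : 1 ≤ (1 - 1 / (2 : ℝ) ^ (i + 1))⁻¹ :=
    one_le_inv_one_sub_one_div_pow one_lt_two i.succ_ne_zero
  calc ∏ i ∈ range n, (1 - 1 / (2 : ℝ) ^ (i + 1))⁻¹
      ≤ ∏ i ∈ range (9 + n), (1 - 1 / (2 : ℝ) ^ (i + 1))⁻¹ :=
        prod_le_prod_of_subset_of_one_le (range_subset_range.2 (by omega))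
          (fun i _ => zero_le_one.trans (hfactor i)) fun i _ _ => hfactor i
    _ = (∏ i ∈ range 9, (1 - 1 / (2 : ℝ) ^ (i + 1))⁻¹) *
          ∏ j ∈ range n, (1 - 1 / (2 : ℝ) ^ (9 + j + 1))⁻¹ := prod_range_add _ 9 n
    _ ≤ 3.4594 * (1 - 1 / 2 ^ 9)⁻¹ := by
        gcongr
        · exact prod_nonneg fun i _ => zero_le_one.trans (hfactor _)
        · norm_num [prod_range_succ]
        · exact prod_range_inv_one_sub_one_div_two_pow_add_le (by norm_num) n
    _ ≤ 7 / 2 := by norm_num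

/-- For `q ≥ 2`, `∏_{i ≥ 1} (1 - 1/q^i)^{-1} ≤ 3.5`. -/
theorem prod_inv_le (q : ℝ) (hq : 2 ≤ q) :
    (∏' i : ℕ, (1 - 1 / q ^ (i + 1))⁻¹) ≤ 3.5 := by
  refine tprod_le_of_prod_range_le fun n => ?_
  calc ∏ i ∈ range n, (1 - 1 / q ^ (i + 1))⁻¹
      ≤ ∏ i ∈ range n, (1 - 1 / (2 : ℝ) ^ (i + 1))⁻¹ :=
        prod_le_prod
          (fun i _ => zero_le_one.trans
            (one_le_inv_one_sub_one_div_pow (one_lt_two.trans_le hq) i.succ_ne_zero))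
          fun i _ => inv_one_sub_one_div_pow_le one_lt_two hq i.succ_ne_zero
    _ ≤ 3.5 := (prod_range_inv_one_sub_one_div_two_pow_le n).trans_eq (by norm_num)
end

section
/- For real q ≥ 2 and integer n ≥ 1, the tail sum ∑_{m > n} q^{\binom{m}{2}} / ((q^m - 1)⋯(q - 1)) · ∏_{i≥1}(1 - 1/q^i) is at most 2/q^{n+1}, and the single term with m = n + 1 is at least 0.77/q^{n+1}. -/
/-!
Since `∏_{k=1}^m (q^k - 1) = q^{(m+1 choose 2)} ∏_{k=1}^m (1 - q⁻ᵏ)`, the `m`-th term equals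
`q⁻ᵐ ∏_{i > m} (1 - q⁻ⁱ)`. The tail product lies in `[0, 1]`, so the sum is at most the geometric
series `∑_{m > n} q⁻ᵐ ≤ 2 q⁻⁽ⁿ⁺¹⁾`. The tail product grows with `q` and `m`, so for `q ≥ 2` and
`m = n + 1 ≥ 2` it is at least `∏_{i ≥ 3} (1 - 2⁻ⁱ) > 0.77`.
-/

open Finset

theorem Finset.one_sub_sum_le_prod_one_sub_s8 {ι R : Type*} [CommRing R] [PartialOrder R]
    [IsOrderedRing R] (s : Finset ι) {a : ι → R} (h0 : ∀ i ∈ s, 0 ≤ a i)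
    (h1 : ∀ i ∈ s, a i ≤ 1) : 1 - ∑ i ∈ s, a i ≤ ∏ i ∈ s, (1 - a i) := by
  classical
  induction s using Finset.induction_on with
  | empty => simp
  | insert j s hj ih =>
    rw [sum_insert hj, prod_insert hj]
    have hP :=
      ih (fun i hi => h0 i (mem_insert_of_mem hi)) fun i hi => h1 i (mem_insert_of_mem hi)
    have haj : 0 ≤ a j := h0 j (mem_insert_self j s)
    have hsub : 0 ≤ 1 - a j := sub_nonneg.2 (h1 j (mem_insert_self j s))
    have hS : 0 ≤ a j * ∑ i ∈ s, a i :=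
      mul_nonneg haj (sum_nonneg fun i hi => h0 i (mem_insert_of_mem hi))
    calc 1 - (a j + ∑ i ∈ s, a i) ≤ (1 - a j) * (1 - ∑ i ∈ s, a i) := by linear_combination hS
      _ ≤ (1 - a j) * ∏ i ∈ s, (1 - a i) := mul_le_mul_of_nonneg_left hP hsub

section RealProducts

variable {ι : Type*} {f g a : ι → ℝ}

theorem multipliable_one_sub_of_summable (ha : Summable a) : Multipliable fun i => 1 - a i := by
  simpa only [sub_eq_add_neg] using Real.multipliable_one_add_of_summable ha.neg

theorem tprod_le_one_of_le_one (h0 : ∀ i, 0 ≤ f i) (h1 : ∀ i, f i ≤ 1) : ∏' i, f i ≤ 1 := by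
  by_cases hf : Multipliable f
  · exact le_of_tendsto' hf.hasProd fun _ => prod_le_one (fun i _ => h0 i) fun i _ => h1 i
  · rw [tprod_eq_one_of_not_multipliable hf]

theorem tprod_le_tprod_of_nonneg (h0 : ∀ i, 0 ≤ f i) (h : ∀ i, f i ≤ g i) (hf : Multipliable f)
    (hg : Multipliable g) : ∏' i, f i ≤ ∏' i, g i :=
  le_of_tendsto_of_tendsto' hf.hasProd hg.hasProd fun _ =>
    prod_le_prod (fun i _ => h0 i) fun i _ => h i

theorem one_sub_tsum_le_tprod_one_sub (h0 : ∀ i, 0 ≤ a i) (h1 : ∀ i, a i ≤ 1) (ha : Summable a) :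
    1 - ∑' i, a i ≤ ∏' i, (1 - a i) :=
  le_of_tendsto_of_tendsto' (ha.hasSum.const_sub 1) (multipliable_one_sub_of_summable ha).hasProd
    fun s => s.one_sub_sum_le_prod_one_sub_s8 (fun i _ => h0 i) fun i _ => h1 i

end RealProducts

theorem prod_Icc_pow_sub_one {K : Type*} [Field K] {q : K} (hq : q ≠ 0) (m : ℕ) :
    ∏ k ∈ Icc 1 m, (q ^ k - 1) = q ^ ((m + 1).choose 2) * ∏ k ∈ range m, (1 - 1 / q ^ (k + 1)) := by
  induction m with
  | zero => simp
  | succ m ih =>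
    rw [prod_Icc_succ_top (by omega), ih, prod_range_succ, Nat.choose_succ_succ' (m + 1),
      Nat.choose_one_right, pow_add]
    field_simp
    ring

theorem tsum_pow_add_mul_le {r : ℝ} (hr0 : 0 ≤ r) (hr1 : r < 1) {c : ℕ → ℝ}
    (hc0 : ∀ j, 0 ≤ c j) (hc1 : ∀ j, c j ≤ 1) (n : ℕ) :
    ∑' j : ℕ, r ^ (n + j) * c j ≤ r ^ n / (1 - r) := by
  have hgeo : Summable fun j : ℕ => r ^ n * r ^ j :=
    (summable_geometric_of_lt_one hr0 hr1).mul_left _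
  have hle : ∀ j, r ^ (n + j) * c j ≤ r ^ n * r ^ j := fun j => by
    rw [pow_add]; exact mul_le_of_le_one_right (by positivity) (hc1 j)
  calc ∑' j : ℕ, r ^ (n + j) * c j ≤ ∑' j : ℕ, r ^ n * r ^ j :=
        (hgeo.of_nonneg_of_le (fun j => mul_nonneg (by positivity) (hc0 j)) hle).tsum_le_tsum
          hle hgeo
    _ = r ^ n / (1 - r) := by rw [tsum_mul_left, tsum_geometric_of_lt_one hr0 hr1, div_eq_mul_inv]

theorem one_div_pow_le_one {q : ℝ} (hq : 1 ≤ q) (k : ℕ) : 1 / q ^ k ≤ 1 :=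
  div_le_one_of_le₀ (one_le_pow₀ hq) (by positivity)

noncomputable def eulerProductTail (q : ℝ) (m : ℕ) : ℝ := ∏' i : ℕ, (1 - 1 / q ^ (i + m + 1))

section EulerProductTail

variable {q : ℝ} (m : ℕ)

theorem multipliable_one_sub_one_div_pow (hq : 1 < q) :
    Multipliable fun i : ℕ => 1 - 1 / q ^ (i + m + 1) := by
  have hgeo := summable_geometric_of_lt_one (by positivity : 0 ≤ 1 / q)
    ((div_lt_one (by linarith)).2 hq)
  refine multipliable_one_sub_of_summable ?_
  simpa only [one_div_pow, add_assoc] using (summable_nat_add_iff (m + 1)).2 hgeo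

theorem eulerProductTail_nonneg (hq : 1 ≤ q) : 0 ≤ eulerProductTail q m :=
  tprod_nonneg fun _ => sub_nonneg.2 (one_div_pow_le_one hq _)

theorem eulerProductTail_le_one (hq : 1 ≤ q) : eulerProductTail q m ≤ 1 :=
  tprod_le_one_of_le_one (fun i => sub_nonneg.2 (one_div_pow_le_one hq _))
    fun _ => sub_le_self _ (by positivity)

theorem eulerProductTail_mono {p : ℝ} (hp : 1 < p) (hpq : p ≤ q) {k : ℕ} (hkm : k ≤ m) :
    eulerProductTail p k ≤ eulerProductTail q m := by
  refine tprod_le_tprod_of_nonneg (fun i => sub_nonneg.2 (one_div_pow_le_one hp.le _)) (fun i => ?_)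
    (multipliable_one_sub_one_div_pow k hp) (multipliable_one_sub_one_div_pow m (hp.trans_le hpq))
  have hp0 : 0 < p := by linarith
  gcongr 1 - 1 / ?_
  calc p ^ (i + k + 1) ≤ p ^ (i + m + 1) := pow_le_pow_right₀ hp.le (by omega)
    _ ≤ q ^ (i + m + 1) := pow_le_pow_left₀ hp0.le hpq _

theorem pow_choose_two_div_prod_mul_tprod (hq : 1 < q) :
    q ^ (m.choose 2) / (∏ k ∈ Icc 1 m, (q ^ k - 1)) * ∏' i : ℕ, (1 - 1 / q ^ (i + 1)) =
      (1 / q) ^ m * eulerProductTail q m := by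
  have hfactor : ∀ k : ℕ, 0 < 1 - 1 / q ^ (k + 1) := fun k => by
    rw [sub_pos, div_lt_one (by positivity)]; exact one_lt_pow₀ hq k.succ_ne_zero
  have hchoose : (m + 1).choose 2 = m.choose 2 + m := by
    rw [Nat.choose_succ_succ', Nat.choose_one_right, add_comm]
  rw [prod_Icc_pow_sub_one (by positivity), hchoose, pow_add, eulerProductTail,
    ← Multipliable.prod_mul_tprod_nat_mul' (f := fun i => 1 - 1 / q ^ (i + 1))
      (multipliable_one_sub_one_div_pow m hq)]
  have hhead := (prod_pos fun k (_ : k ∈ range m) => hfactor k).ne'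
  generalize ∏ k ∈ range m, (1 - 1 / q ^ (k + 1)) = P at hhead ⊢
  generalize ∏' i : ℕ, (1 - 1 / q ^ (i + m + 1)) = T
  rw [one_div_pow]
  field_simp

end EulerProductTail

/- `∏_{i ≥ 3} (1 - 2⁻ⁱ) ≈ 0.7701`, so the first five factors are multiplied out exactly and only
the rest is bounded by `1 - ∑ 2⁻ⁱ = 1 - 2⁻⁷`. -/
theorem le_eulerProductTail_two_two : (0.77 : ℝ) ≤ eulerProductTail 2 2 := by
  have hterm : ∀ i : ℕ, 1 / (2 : ℝ) ^ (i + 5 + 2 + 1) = 1 / 2 ^ 7 / 2 / 2 ^ i := fun i => by ring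
  have htail : 1 - 1 / (2 : ℝ) ^ 7 ≤ ∏' i : ℕ, (1 - 1 / (2 : ℝ) ^ (i + 5 + 2 + 1)) := by
    simp_rw [hterm]
    calc 1 - 1 / (2 : ℝ) ^ 7 = 1 - ∑' i : ℕ, 1 / (2 : ℝ) ^ 7 / 2 / 2 ^ i := by
          rw [tsum_geometric_two']
      _ ≤ _ := one_sub_tsum_le_tprod_one_sub (fun i => by positivity)
          (fun i => by rw [← hterm]; exact one_div_pow_le_one one_le_two _)
          (summable_geometric_two' _)
  rw [eulerProductTail, ← Multipliable.prod_mul_tprod_nat_mul'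
    (f := fun i => 1 - 1 / (2 : ℝ) ^ (i + 2 + 1))
    (multipliable_one_sub_one_div_pow (5 + 2) one_lt_two)]
  calc (0.77 : ℝ) ≤ (∏ i ∈ range 5, (1 - 1 / (2 : ℝ) ^ (i + 2 + 1))) * (1 - 1 / 2 ^ 7) := by
        norm_num [prod_range_succ]
    _ ≤ _ := mul_le_mul_of_nonneg_left htail
      (prod_nonneg fun _ _ => sub_nonneg.2 (one_div_pow_le_one one_le_two _))

/-- For `q ≥ 2` and `n ≥ 1`, the tail sum
`∑_{m > n} q^{\binom{m}{2}}/((q^m-1)⋯(q-1)) · ∏_{i ≥ 1}(1 - 1/q^i)` is at most `2/q^{n+1}`,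
and the `m = n+1` term is at least `0.77/q^{n+1}`. -/
theorem tail_sum_bounds (q : ℝ) (hq : 2 ≤ q) (n : ℕ) (hn : 1 ≤ n) :
    (∑' j : ℕ, q ^ ((n + 1 + j).choose 2) / (∏ k ∈ Finset.Icc 1 (n + 1 + j), (q ^ k - 1)) *
        ∏' i : ℕ, (1 - 1 / q ^ (i + 1))) ≤ 2 / q ^ (n + 1) ∧
      0.77 / q ^ (n + 1) ≤
        q ^ ((n + 1).choose 2) / (∏ k ∈ Finset.Icc 1 (n + 1), (q ^ k - 1)) *
          ∏' i : ℕ, (1 - 1 / q ^ (i + 1)) := by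
  have hq1 : 1 < q := by linarith
  have hr : 1 / q ≤ 1 / 2 := one_div_le_one_div_of_le two_pos hq
  simp_rw [pow_choose_two_div_prod_mul_tprod _ hq1]
  constructor
  · calc ∑' j : ℕ, (1 / q) ^ (n + 1 + j) * eulerProductTail q (n + 1 + j)
          ≤ (1 / q) ^ (n + 1) / (1 - 1 / q) :=
        tsum_pow_add_mul_le (by positivity) (by linarith)
          (fun _ => eulerProductTail_nonneg _ hq1.le) (fun _ => eulerProductTail_le_one _ hq1.le)
          (n + 1)
      _ ≤ (1 / q) ^ (n + 1) / (1 / 2) :=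
        div_le_div_of_nonneg_left (by positivity) (by norm_num) (by linarith)
      _ = 2 / q ^ (n + 1) := by ring
  · calc 0.77 / q ^ (n + 1) = (1 / q) ^ (n + 1) * 0.77 := by ring
      _ ≤ (1 / q) ^ (n + 1) * eulerProductTail 2 2 := by
          gcongr
          exact le_eulerProductTail_two_two
      _ ≤ (1 / q) ^ (n + 1) * eulerProductTail q (n + 1) := by
          gcongr
          exact eulerProductTail_mono _ one_lt_two hq (by omega)
end

section
/- For real q ≥ 2 and integer n ≥ 1, ∑_{m=0}^{n} q^{\binom{m}{2}}/((q^m-1)⋯(q-1)) · |∏_{i≥1}(1 - 1/q^i) - ∑_{j=0}^{n-m} (-1)^j/((q^j-1)⋯(q-1))| ≤ 26/q^{n+1}. -/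
/-!
Euler's identity `∏_{i ≥ 1} (1 - z / q^i) = ∑_j (-z)^j / ((q^j - 1)⋯(q - 1))` for `|z| ≤ 1`
follows from the functional equation `F(z) = (1 - z/q) F(z/q)` of the right-hand side `F`
together with `F(z/q^M) → F(0) = 1`. At `z = 1` it makes the `m`-th summand's absolute value
the tail of an alternating series with decreasing terms, so it is at most
`1 / ((q^{n-m+1} - 1)⋯(q - 1))`. Since `∏_{k ≥ 1} (1 - q^{-k}) ≥ 9/32`, we have
`(q^j - 1)⋯(q - 1) ≥ (9/32) q^{\binom{j+1}{2}}`, which bounds the `m`-th summand by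
`(32/9)² q^{-(n+1)} 2^{-(n-m)}`; summing over `m` gives `2 (32/9)² < 26`.
-/

open Finset Filter Topology

namespace CohenLenstra

noncomputable def qProd (q : ℝ) (j : ℕ) : ℝ := ∏ k ∈ Icc 1 j, (q ^ k - 1)

variable {q : ℝ}

lemma choose_two_succ (n : ℕ) : (n + 1).choose 2 = n + n.choose 2 := by
  rw [Nat.choose_succ_succ, Nat.choose_one_right]

lemma qProd_zero : qProd q 0 = 1 := by simp [qProd]

lemma qProd_succ (j : ℕ) : qProd q (j + 1) = qProd q j * (q ^ (j + 1) - 1) :=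
  prod_Icc_succ_top (Nat.le_add_left 1 j) _

lemma qProd_pos (hq : 1 < q) (j : ℕ) : 0 < qProd q j :=
  prod_pos fun k hk => sub_pos.2 (one_lt_pow₀ hq (by grind))

lemma monotone_qProd (hq : 2 ≤ q) : Monotone (qProd q) := by
  refine monotone_nat_of_le_succ fun j => ?_
  have : 2 ≤ q ^ (j + 1) := hq.trans (le_self_pow₀ (by linarith) (by omega))
  rw [qProd_succ]
  exact le_mul_of_one_le_right (qProd_pos (by linarith) j).le (by linarith)

lemma qProd_eq_pow_mul_prod (hq : q ≠ 0) (j : ℕ) :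
    qProd q j = q ^ (j + 1).choose 2 * ∏ k ∈ Icc 1 j, (1 - (q ^ k)⁻¹) := by
  induction j with
  | zero => simp [qProd_zero]
  | succ j ih =>
    have hfactor : q ^ (j + 1) * (1 - (q ^ (j + 1))⁻¹) = q ^ (j + 1) - 1 := by
      field_simp
    rw [qProd_succ, ih, prod_Icc_succ_top (by omega), choose_two_succ (j + 1), pow_add q (j + 1),
      ← hfactor]
    ring

lemma inv_pow_le_half_pow (hq : 2 ≤ q) (k : ℕ) : (q ^ k)⁻¹ ≤ (1 / 2) ^ k := by
  rw [← inv_pow, one_div]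
  gcongr

lemma le_prod_one_sub_inv_pow (hq : 2 ≤ q) (j : ℕ) :
    9 / 32 ≤ ∏ k ∈ Icc 1 j, (1 - (q ^ k)⁻¹) := by
  -- `(3/8) (1 - ∑_{k=3}^{j+2} 2^{-k})`: Weierstrass' `∏ (1 - x_k) ≥ 1 - ∑ x_k` on the factors `k ≥ 3`
  have key (j : ℕ) : 9 / 32 + 3 / 32 * (1 / 2) ^ j ≤ ∏ k ∈ Icc 1 (j + 2), (1 - (q ^ k)⁻¹) := by
    induction j with
    | zero =>
      have h1 := inv_pow_le_half_pow hq 1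
      have h2 := inv_pow_le_half_pow hq 2
      norm_num [prod_Icc_succ_top] at h1 h2 ⊢
      nlinarith
    | succ j ih =>
      rw [prod_Icc_succ_top (by omega), pow_succ (1 / 2 : ℝ) j]
      set t : ℝ := (1 / 2) ^ j
      have hu : (q ^ (j + 2 + 1))⁻¹ ≤ t / 8 :=
        calc (q ^ (j + 2 + 1))⁻¹ ≤ (1 / 2) ^ (j + 2 + 1) := inv_pow_le_half_pow hq _
          _ = t / 8 := by rw [pow_add, pow_add]; ring
      have ht : t ≤ 1 := pow_le_one₀ (by norm_num) (by norm_num)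
      have ht' : 0 < t := by positivity
      have hp : 0 ≤ ∏ k ∈ Icc 1 (j + 2), (1 - (q ^ k)⁻¹) := by linarith
      nlinarith [mul_le_mul_of_nonneg_left hu hp,
        mul_le_mul_of_nonneg_right ih (by linarith : (0 : ℝ) ≤ 1 - t / 8)]
  rcases j with _ | _ | j
  · norm_num
  · have := inv_pow_le_half_pow hq 1
    norm_num at this ⊢
    linarith
  · have : (0 : ℝ) ≤ (1 / 2) ^ j := by positivity
    linarith [key j]

lemma le_qProd (hq : 2 ≤ q) (j : ℕ) : 9 / 32 * q ^ (j + 1).choose 2 ≤ qProd q j := by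
  rw [qProd_eq_pow_mul_prod (by positivity), mul_comm]
  gcongr
  exact le_prod_one_sub_inv_pow hq j

lemma antitone_inv_qProd (hq : 2 ≤ q) : Antitone fun j => (qProd q j)⁻¹ :=
  fun _ _ h => inv_anti₀ (qProd_pos (by linarith) _) (monotone_qProd hq h)

lemma inv_qProd_succ_le (hq : 2 ≤ q) (d : ℕ) :
    (qProd q (d + 1))⁻¹ ≤ 32 / 9 * (1 / 2) ^ d / q ^ (d + 1) := by
  have hchoose : (d + 1) + d ≤ (d + 1 + 1).choose 2 := by
    rw [choose_two_succ, choose_two_succ]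
    omega
  have hpow : q ^ (d + 1) * 2 ^ d ≤ q ^ (d + 1 + 1).choose 2 :=
    calc q ^ (d + 1) * 2 ^ d ≤ q ^ (d + 1) * q ^ d := by gcongr
      _ ≤ q ^ (d + 1 + 1).choose 2 := by
        rw [← pow_add]
        exact pow_le_pow_right₀ (by linarith) hchoose
  calc (qProd q (d + 1))⁻¹ ≤ (9 / 32 * (q ^ (d + 1) * 2 ^ d))⁻¹ :=
        inv_anti₀ (by positivity)
          ((mul_le_mul_of_nonneg_left hpow (by norm_num)).trans (le_qProd hq _))
    _ = 32 / 9 * (1 / 2) ^ d / q ^ (d + 1) := by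
        rw [div_pow, one_pow]
        field_simp

lemma summable_inv_qProd (hq : 2 ≤ q) : Summable fun j => (qProd q j)⁻¹ := by
  refine (summable_nat_add_iff 1).1 <| (summable_geometric_two.mul_left (32 / 9)).of_nonneg_of_le
    (fun _ => (inv_pos.2 (qProd_pos (by linarith) _)).le) fun d => (inv_qProd_succ_le hq d).trans ?_
  exact div_le_self (by positivity) (one_le_pow₀ (by linarith))

noncomputable def eulerSeries (q z : ℝ) : ℝ := ∑' j, (-z) ^ j / qProd q j

lemma norm_eulerSeries_term_le (hq : 2 ≤ q) {z : ℝ} (hz : |z| ≤ 1) (j : ℕ) :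
    ‖(-z) ^ j / qProd q j‖ ≤ (qProd q j)⁻¹ := by
  have hpos := qProd_pos (one_lt_two.trans_le hq) j
  rw [norm_div, norm_pow, norm_neg, Real.norm_eq_abs, Real.norm_of_nonneg hpos.le, div_eq_mul_inv]
  exact mul_le_of_le_one_left (inv_pos.2 hpos).le (pow_le_one₀ (abs_nonneg z) hz)

lemma summable_eulerSeries (hq : 2 ≤ q) {z : ℝ} (hz : |z| ≤ 1) :
    Summable fun j => (-z) ^ j / qProd q j :=
  (summable_inv_qProd hq).of_norm_bounded (norm_eulerSeries_term_le hq hz)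

lemma eulerSeries_zero : eulerSeries q 0 = 1 := by
  rw [eulerSeries, tsum_eq_single 0 (fun j hj => by simp [zero_pow hj])]
  simp [qProd_zero]

lemma continuousOn_eulerSeries (hq : 2 ≤ q) : ContinuousOn (eulerSeries q) (Set.Icc (-1) 1) :=
  continuousOn_tsum (fun j => by fun_prop) (summable_inv_qProd hq)
    fun j z hz => norm_eulerSeries_term_le hq (abs_le.2 hz) j

lemma eulerSeries_eq_mul (hq : 2 ≤ q) {z : ℝ} (hz : |z| ≤ 1) :
    eulerSeries q z = (1 - z / q) * eulerSeries q (z / q) := by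
  set w := z / q
  have hw : |w| ≤ 1 := by
    rw [abs_div, abs_of_pos (by linarith : 0 < q)]
    exact div_le_one_of_le₀ (hz.trans (by linarith)) (by linarith)
  have hf := summable_eulerSeries hq hz
  have hg := summable_eulerSeries hq hw
  have hstep (j : ℕ) : (-z) ^ (j + 1) / qProd q (j + 1)
      = (-w) ^ (j + 1) / qProd q (j + 1) - w * ((-w) ^ j / qProd q j) := by
    have hzw : z = q * w := (mul_div_cancel₀ z (by linarith : q ≠ 0)).symm
    have h1 := qProd_pos (by linarith : 1 < q) j
    have h2 : q ^ (j + 1) - 1 ≠ 0 := by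
      have := one_lt_pow₀ (by linarith : 1 < q) (by omega : j + 1 ≠ 0); linarith
    rw [qProd_succ, hzw]
    field_simp
    ring
  rw [eulerSeries, eulerSeries, hf.tsum_eq_zero_add, tsum_congr hstep,
    ((summable_nat_add_iff 1).2 hg).tsum_sub (hg.mul_left w), tsum_mul_left, hg.tsum_eq_zero_add]
  simp only [pow_zero, qProd_zero, div_one]
  ring

lemma eulerSeries_eq_prod_mul (hq : 2 ≤ q) {z : ℝ} (hz : |z| ≤ 1) (M : ℕ) :
    eulerSeries q z = (∏ i ∈ range M, (1 - z / q ^ (i + 1))) * eulerSeries q (z / q ^ M) := by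
  induction M with
  | zero => simp
  | succ M ih =>
    have hzM : |z / q ^ M| ≤ 1 := by
      have hqM : 0 < q ^ M := pow_pos (by linarith) M
      rw [abs_div, abs_of_pos hqM]
      exact div_le_one_of_le₀ (hz.trans (one_le_pow₀ (by linarith))) hqM.le
    rw [ih, eulerSeries_eq_mul hq hzM, prod_range_succ, div_div, ← pow_succ]
    ring

lemma tendsto_eulerSeries_div_pow (hq : 2 ≤ q) {z : ℝ} (hz : |z| ≤ 1) :
    Tendsto (fun M => eulerSeries q (z / q ^ M)) atTop (𝓝 1) := by
  have hlim : Tendsto (fun M => z / q ^ M) atTop (𝓝[Set.Icc (-1) 1] 0) := by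
    refine tendsto_nhdsWithin_iff.2 ⟨tendsto_const_nhds.div_atTop
      (tendsto_pow_atTop_atTop_of_one_lt (by linarith)), Eventually.of_forall fun M => ?_⟩
    have hqM : 0 < q ^ M := pow_pos (by linarith) M
    rw [Set.mem_Icc, ← abs_le, abs_div, abs_of_pos hqM]
    exact div_le_one_of_le₀ (hz.trans (one_le_pow₀ (by linarith))) hqM.le
  rw [← eulerSeries_zero (q := q)]
  exact ((continuousOn_eulerSeries hq) 0 (by norm_num)).tendsto.comp hlim

lemma multipliable_one_sub_div_pow (hq : 1 < q) (z : ℝ) :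
    Multipliable fun i : ℕ => 1 - z / q ^ (i + 1) := by
  simp_rw [sub_eq_add_neg]
  refine Real.multipliable_one_add_of_summable ?_
  have hr : |q⁻¹| < 1 := by
    rw [abs_of_pos (by positivity)]
    exact inv_lt_one_of_one_lt₀ hq
  refine ((summable_geometric_of_abs_lt_one hr).mul_left (-(z / q))).congr fun i => ?_
  rw [inv_pow, pow_succ]
  ring

theorem tprod_one_sub_div_pow_eq_eulerSeries (hq : 2 ≤ q) {z : ℝ} (hz : |z| ≤ 1) :
    ∏' i : ℕ, (1 - z / q ^ (i + 1)) = eulerSeries q z := by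
  have hprod := (multipliable_one_sub_div_pow (one_lt_two.trans_le hq) z).hasProd.tendsto_prod_nat
    |>.mul (tendsto_eulerSeries_div_pow hq hz)
  simp_rw [← eulerSeries_eq_prod_mul hq hz, mul_one] at hprod
  exact tendsto_nhds_unique hprod tendsto_const_nhds

lemma abs_tprod_sub_sum_le (hq : 2 ≤ q) (N : ℕ) :
    |∏' i : ℕ, (1 - 1 / q ^ (i + 1)) - ∑ j ∈ range N, (-1) ^ j / qProd q j| ≤ (qProd q N)⁻¹ := by
  have h := alternating_series_error_bound _ (antitone_inv_qProd hq) (summable_inv_qProd hq) N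
  simp_rw [← div_eq_mul_inv] at h
  rwa [tprod_one_sub_div_pow_eq_eulerSeries hq (by norm_num), eulerSeries]

lemma pow_choose_two_div_qProd_le (hq : 2 ≤ q) (m : ℕ) :
    q ^ m.choose 2 / qProd q m ≤ 32 / 9 / q ^ m := by
  have hle := le_qProd hq m
  rw [choose_two_succ, pow_add] at hle
  have hpos := qProd_pos (one_lt_two.trans_le hq) m
  have hqm : 0 < q ^ m := pow_pos (by linarith) m
  rw [div_le_div_iff₀ hpos hqm]
  nlinarith

lemma summand_le (hq : 2 ≤ q) {m n : ℕ} (hmn : m ≤ n) :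
    q ^ m.choose 2 / qProd q m *
        |∏' i : ℕ, (1 - 1 / q ^ (i + 1)) - ∑ j ∈ range (n - m + 1), (-1) ^ j / qProd q j| ≤
      (32 / 9) ^ 2 / q ^ (n + 1) * (1 / 2) ^ (n - m) := by
  obtain ⟨d, rfl⟩ := Nat.exists_eq_add_of_le hmn
  have hq0 : 0 < q := by linarith
  rw [Nat.add_sub_cancel_left]
  calc _ ≤ 32 / 9 / q ^ m * (32 / 9 * (1 / 2) ^ d / q ^ (d + 1)) :=
        mul_le_mul (pow_choose_two_div_qProd_le hq m)
          ((abs_tprod_sub_sum_le hq (d + 1)).trans (inv_qProd_succ_le hq d)) (abs_nonneg _)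
          (by positivity)
    _ = (32 / 9) ^ 2 / q ^ (m + d + 1) * (1 / 2) ^ d := by
        field_simp
        ring

end CohenLenstra

theorem small_partitions_bound_general (q : ℝ) (hq : 2 ≤ q) (n : ℕ) :
    (∑ m ∈ Finset.range (n + 1),
        q ^ (m.choose 2) / (∏ k ∈ Finset.Icc 1 m, (q ^ k - 1)) *
          |(∏' i : ℕ, (1 - 1 / q ^ (i + 1))) -
            ∑ j ∈ Finset.range (n - m + 1),
              (-1 : ℝ) ^ j / ∏ k ∈ Finset.Icc 1 j, (q ^ k - 1)|) ≤
      26 / q ^ (n + 1) := by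
  have hq0 : 0 < q := by linarith
  calc _ ≤ ∑ m ∈ range (n + 1), (32 / 9) ^ 2 / q ^ (n + 1) * (1 / 2 : ℝ) ^ (n - m) :=
        sum_le_sum fun m hm => CohenLenstra.summand_le hq (Nat.lt_succ_iff.1 (mem_range.1 hm))
    _ = (32 / 9) ^ 2 / q ^ (n + 1) * ∑ d ∈ range (n + 1), (1 / 2 : ℝ) ^ d := by
        rw [mul_sum]
        exact sum_range_reflect (fun d => (32 / 9) ^ 2 / q ^ (n + 1) * (1 / 2 : ℝ) ^ d) (n + 1)
    _ ≤ (32 / 9) ^ 2 / q ^ (n + 1) * 2 := by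
        gcongr
        exact sum_geometric_two_le _
    _ ≤ 26 / q ^ (n + 1) := by
        rw [div_mul_eq_mul_div]
        gcongr
        norm_num

/-- For `q ≥ 2` and `n ≥ 1`,
`∑_{m=0}^n q^{\binom{m}{2}}/((q^m-1)⋯(q-1)) · |∏_{i≥1}(1-1/q^i) - ∑_{j=0}^{n-m}(-1)^j/((q^j-1)⋯(q-1))|
  ≤ 26/q^{n+1}`. -/
theorem small_partitions_bound (q : ℝ) (hq : 2 ≤ q) (n : ℕ) (hn : 1 ≤ n) :
    (∑ m ∈ Finset.range (n + 1),
        q ^ (m.choose 2) / (∏ k ∈ Finset.Icc 1 m, (q ^ k - 1)) *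
          |(∏' i : ℕ, (1 - 1 / q ^ (i + 1))) -
            ∑ j ∈ Finset.range (n - m + 1),
              (-1 : ℝ) ^ j / ∏ k ∈ Finset.Icc 1 j, (q ^ k - 1)|) ≤
      26 / q ^ (n + 1) :=
  small_partitions_bound_general q hq n
end

section
/- For a real number q > 1 and |u| < q, replacing q by -q: ∏_{i≥1} (1 + u/(-q)^i) = ∑_{j≥0} (-1)^{\binom{j+1}{2}} u^j / ((q^j - (-1)^j)(q^{j-1} - (-1)^{j-1}) ⋯ (q + 1)). -/
/-!
With `t = (-q)⁻¹` the product is `∏ (1 + u t^(i+1))`. Expanding it over finite sets of indices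
and grouping by cardinality gives `∑ u^j e_j`, where `e_j` is the `j`-th elementary symmetric
function of `t, t², t³, …`. Sorting the `(j+1)`-sets by whether they contain `0` and shifting
them down by one gives `e_(j+1) = t^(j+1) (e_j + e_(j+1))`, hence
`e_j = ∏_{k ≤ j} t^k / (1 - t^k)`, and for `t = -1/q` each factor is `(-1)^k / (q^k - (-1)^k)`.
-/

open Finset

namespace Finset

noncomputable def natShiftEquiv : Finset ℕ ⊕ Finset ℕ ≃ Finset ℕ where
  toFun := Sum.elim (map (addRightEmbedding 1)) (fun T ↦ insert 0 (T.map (addRightEmbedding 1)))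
  invFun S :=
    if 0 ∈ S then .inr (S.preimage (· + 1) (add_left_injective 1).injOn)
    else .inl (S.preimage (· + 1) (add_left_injective 1).injOn)
  left_inv := by
    rintro (T | T) <;> simp [Finset.ext_iff]
  right_inv S := by
    by_cases h : 0 ∈ S <;> simp only [h, if_true, if_false, Sum.elim_inl, Sum.elim_inr] <;>
      ext (_ | n) <;> simp [h]

lemma prod_pow_add_one_add_one {M : Type*} [CommMonoid M] (x : M) (T : Finset ℕ) :
    ∏ i ∈ T, x ^ (i + 1 + 1) = x ^ #T * ∏ i ∈ T, x ^ (i + 1) := by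
  simp [pow_succ, prod_mul_distrib, mul_comm]

end Finset

section EulerIdentity

variable {𝕜 : Type*} [NormedField 𝕜] {t : 𝕜}

/-- The `j`-th elementary symmetric function of `t, t², t³, …`. -/
noncomputable def esymmPowers (t : 𝕜) (j : ℕ) : 𝕜 :=
  ∑' S : Finset.card ⁻¹' {j}, ∏ i ∈ S.1, t ^ (i + 1)

lemma summable_prod_mul_pow_succ [CompleteSpace 𝕜] (ht : ‖t‖ < 1) (u : 𝕜) :
    Summable fun S : Finset ℕ ↦ ∏ i ∈ S, u * t ^ (i + 1) := by
  refine summable_finsetProd_of_summable_norm ?_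
  simpa [pow_succ', mul_assoc] using
    ((summable_geometric_of_lt_one (norm_nonneg t) ht).mul_left (‖u‖ * ‖t‖))

lemma hasSum_pow_mul_esymmPowers [CompleteSpace 𝕜] (ht : ‖t‖ < 1) (u : 𝕜) :
    HasSum (fun j ↦ u ^ j * esymmPowers t j) (∏' i : ℕ, (1 + u * t ^ (i + 1))) := by
  have h := summable_prod_mul_pow_succ ht u
  rw [tprod_one_add h]
  refine (h.hasSum.tsum_fiberwise Finset.card).congr_fun fun j ↦ ?_
  rw [esymmPowers, ← tsum_mul_left]
  refine tsum_congr fun S ↦ ?_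
  rw [prod_mul_distrib, prod_const, S.2]

lemma esymmPowers_zero (t : 𝕜) : esymmPowers t 0 = 1 := by
  have hfiber : Finset.card ⁻¹' {0} = ({∅} : Set (Finset ℕ)) := by ext; simp
  rw [esymmPowers, hfiber]
  exact (tsum_singleton ∅ fun S ↦ ∏ i ∈ S, t ^ (i + 1)).trans prod_empty

lemma esymmPowers_succ [CompleteSpace 𝕜] (ht : ‖t‖ < 1) (j : ℕ) :
    esymmPowers t (j + 1) = t ^ (j + 1) * (esymmPowers t j + esymmPowers t (j + 1)) := by
  set v : Finset ℕ → 𝕜 := fun S ↦ ∏ i ∈ S, t ^ (i + 1)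
  set F := (Finset.card ⁻¹' {j + 1}).indicator v
  have hv : Summable v := by simpa using summable_prod_mul_pow_succ ht 1
  have hF : Summable (F ∘ natShiftEquiv) := natShiftEquiv.summable_iff.mpr (hv.indicator _)
  have h_inl (T : Finset ℕ) :
      F (natShiftEquiv (.inl T)) = t ^ (j + 1) * (Finset.card ⁻¹' {j + 1}).indicator v T := by
    by_cases hT : #T = j + 1 <;>
      simp [F, v, natShiftEquiv, Set.indicator, hT, prod_pow_add_one_add_one]
  have h_inr (T : Finset ℕ) :
      F (natShiftEquiv (.inr T)) = t ^ (j + 1) * (Finset.card ⁻¹' {j}).indicator v T := by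
    by_cases hT : #T = j
    · simp [F, v, natShiftEquiv, Set.indicator, hT, prod_pow_add_one_add_one]
      ring
    · simp [F, v, natShiftEquiv, Set.indicator, hT]
  calc esymmPowers t (j + 1) = ∑' S, F S := _root_.tsum_subtype _ v
    _ = ∑' T, F (natShiftEquiv (.inl T)) + ∑' T, F (natShiftEquiv (.inr T)) := by
      rw [← natShiftEquiv.tsum_eq]
      exact Summable.tsum_sum (hF.comp_injective Sum.inl_injective)
        (hF.comp_injective Sum.inr_injective)
    _ = t ^ (j + 1) * (esymmPowers t j + esymmPowers t (j + 1)) := by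
      rw [tsum_congr h_inl, tsum_congr h_inr, tsum_mul_left, tsum_mul_left, esymmPowers,
        esymmPowers, _root_.tsum_subtype _ v, _root_.tsum_subtype _ v, add_comm, mul_add]

lemma esymmPowers_eq_prod [CompleteSpace 𝕜] (ht : ‖t‖ < 1) (j : ℕ) :
    esymmPowers t j = ∏ k ∈ Icc 1 j, t ^ k / (1 - t ^ k) := by
  induction j with
  | zero => simp [esymmPowers_zero]
  | succ j ih =>
    have hne : 1 - t ^ (j + 1) ≠ 0 := by
      refine sub_ne_zero.2 fun h ↦ ?_
      have := pow_lt_one₀ (norm_nonneg t) ht j.succ_ne_zero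
      rw [← norm_pow, ← h, norm_one] at this
      exact lt_irrefl 1 this
    rw [prod_Icc_succ_top (by omega), ← ih, mul_div_assoc', eq_div_iff hne]
    linear_combination esymmPowers_succ ht j

theorem tprod_one_add_mul_pow_succ [CompleteSpace 𝕜] (ht : ‖t‖ < 1) (u : 𝕜) :
    ∏' i : ℕ, (1 + u * t ^ (i + 1)) = ∑' j : ℕ, u ^ j * ∏ k ∈ Icc 1 j, t ^ k / (1 - t ^ k) := by
  simp only [← esymmPowers_eq_prod ht, (hasSum_pow_mul_esymmPowers ht u).tsum_eq]

end EulerIdentity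

lemma prod_Icc_pow_eq_pow_choose_two {M : Type*} [CommMonoid M] (x : M) (j : ℕ) :
    ∏ k ∈ Icc 1 j, x ^ k = x ^ (j + 1).choose 2 := by
  induction j with
  | zero => simp
  | succ j ih =>
    rw [prod_Icc_succ_top (by omega), ih, ← pow_add, Nat.choose_succ_succ' (j + 1),
      Nat.choose_one_right, add_comm]

lemma inv_neg_pow_div_one_sub_inv_neg_pow {K : Type*} [Field K] {q : K} (hq : q ≠ 0) (k : ℕ) :
    (-q)⁻¹ ^ k / (1 - (-q)⁻¹ ^ k) = (-1) ^ k / (q ^ k - (-1) ^ k) := by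
  have hy : (-q) ^ k ≠ 0 := pow_ne_zero k (neg_ne_zero.2 hq)
  have hs : ((-1 : K) ^ k) ≠ 0 := pow_ne_zero k (by norm_num)
  have hsq : (-1 : K) ^ k * (-1) ^ k = 1 := by rw [← mul_pow]; norm_num
  rw [inv_pow, ← mul_div_mul_right _ _ hy, inv_mul_cancel₀ hy, sub_mul, one_mul,
    inv_mul_cancel₀ hy, ← mul_div_mul_left _ _ hs, mul_one, neg_pow]
  congr 1
  linear_combination q ^ k * hsq

theorem euler_identity_unitary_general (q u : ℝ) (hq : 1 < q) :
    (∏' i : ℕ, (1 + u / (-q) ^ (i + 1))) =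
      ∑' j : ℕ, (-1 : ℝ) ^ ((j + 1).choose 2) * u ^ j /
        ∏ k ∈ Finset.Icc 1 j, (q ^ k - (-1 : ℝ) ^ k) := by
  have hq0 : q ≠ 0 := by positivity
  have ht : ‖(-q)⁻¹‖ < 1 := by
    rw [norm_inv, norm_neg, Real.norm_of_nonneg (by positivity)]
    exact inv_lt_one_of_one_lt₀ hq
  simp only [div_eq_mul_inv u, ← inv_pow, tprod_one_add_mul_pow_succ ht,
    inv_neg_pow_div_one_sub_inv_neg_pow hq0, prod_div_distrib, prod_Icc_pow_eq_pow_choose_two]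
  exact tsum_congr fun j ↦ by ring

/-- Unitary analog of Euler's identity: for `q > 1` and `|u| < q`,
`∏_{i ≥ 1}(1 + u/(-q)^i) = ∑_{j ≥ 0} (-1)^{\binom{j+1}{2}} u^j / ((q^j-(-1)^j)⋯(q+1))`. -/
theorem euler_identity_unitary (q u : ℝ) (hq : 1 < q) (hu : |u| < q) :
    (∏' i : ℕ, (1 + u / (-q) ^ (i + 1))) =
      ∑' j : ℕ, (-1 : ℝ) ^ ((j + 1).choose 2) * u ^ j /
        ∏ k ∈ Finset.Icc 1 j, (q ^ k - (-1 : ℝ) ^ k) :=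
  euler_identity_unitary_general q u hq
end
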